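/- arXiv:1410.4462 — 2 statements merged into one kernel-verified Lean document; each statement's English description precedes it below -/
import Mathlib

section
/- Let M = (M_n)_{n≤0} be Markov kernels on finite E, and suppose that under the independent coupling measure Q, every coalescence time T_n satisfies Q(T_n > −∞) = 1. Then there exists a strictly decreasing sequence (n_i)_{i∈ℕ} of nonpositive integers such that ∑_{i=0}^∞ (1 − β(M_{n_{i+1}, n_i})) = ∞, where β is the Dobrushin coefficient; consequently the backward products of M are weakly ergodic. -/
open scoped BigOperators
open MeasureTheory ProbabilityTheory Filter

/-- Backward products `M_{n,k}`: `M_{k,k} = Id`, `M_{n-1,k} = M_n M_{n,k}`. -/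
noncomputable def backProd {E : Type*} [Fintype E] [DecidableEq E] (M : ℤ → E → E → ℝ)
    (n k : ℤ) (x x' : E) : ℝ :=
  if _h : n < k then ∑ z, M (n + 1) x z * backProd M (n + 1) k z x'
  else if x = x' then 1 else 0
termination_by (k - n).toNat
decreasing_by omega

/-- Composed random maps `Φ_{n,k} = Φ_k ∘ ⋯ ∘ Φ_{n+1}`, where `Φ_m(x) = ξ_m^x = ω m x`. -/
def PhiMap {E : Type*} (ω : ℤ → E → E) (n k : ℤ) (x : E) : E :=
  if _h : n < k then PhiMap ω (n + 1) k (ω (n + 1) x) else x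
termination_by (k - n).toNat
decreasing_by omega

/-- Dobrushin coefficient as the maximal total variation distance between rows. -/
noncomputable def dobrushin {E : Type*} [Fintype E] (K : E → E → ℝ) : ℝ :=
  ⨆ p : E × E, (1 / 2) * ∑ z, |K p.1 z - K p.2 z|

open scoped Topology

/-!
Under the independent coupling, the random map `Φ_{n,k}` sends `x` to `z` with probability
`M_{n,k}(x, z)`: its first step is independent of the later ones, whose composition has law
`M_{n+1,k}` by induction. On the coalescence event all `Φ_{n,k}(x)` agree, so the rows of `M_{n,k}`
differ entrywise by at most the probability `1 - Q(C_{n,k})` that coalescence has not happened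
between `n` and `k`; this tends to `0` as `n → -∞`, which is weak ergodicity. Cutting `(-∞, 0]`
into blocks `[n_{i+1}, n_i]` on each of which coalescence fails with probability below
`1 / (|E| + 1)` bounds every `β(M_{n_{i+1},n_i})` by `1/2`, so the series diverges.
-/

section BackwardProducts

variable {E : Type*}

lemma PhiMap_self (ω : ℤ → E → E) (n : ℤ) (x : E) : PhiMap ω n n x = x := by
  rw [PhiMap]; simp

lemma PhiMap_of_lt (ω : ℤ → E → E) {n k : ℤ} (h : n < k) (x : E) :
    PhiMap ω n k x = PhiMap ω (n + 1) k (ω (n + 1) x) := by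
  rw [PhiMap]; simp [h]

lemma PhiMap_comp (ω : ℤ → E → E) {m k : ℤ} (hmk : m ≤ k) :
    ∀ n ≤ m, ∀ x, PhiMap ω n k x = PhiMap ω m k (PhiMap ω n m x) := by
  refine Int.leInductionDown (fun x => by rw [PhiMap_self]) fun n hnm ih x => ?_
  rw [PhiMap_of_lt ω (show n - 1 < k by omega), PhiMap_of_lt ω (show n - 1 < m by omega),
    sub_add_cancel, ih]

lemma setOf_PhiMap_eq_iUnion {n k : ℤ} (hnk : n < k) (x z : E) :
    {ω : ℤ → E → E | PhiMap ω n k x = z} =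
      ⋃ y, {ω | ω (n + 1) x = y} ∩ {ω | PhiMap ω (n + 1) k y = z} := by
  ext ω
  simp [PhiMap_of_lt ω hnk]

variable [Fintype E] [DecidableEq E]

lemma backProd_self (M : ℤ → E → E → ℝ) (k : ℤ) (x x' : E) :
    backProd M k k x x' = if x = x' then 1 else 0 := by
  rw [backProd]; simp

lemma backProd_of_lt (M : ℤ → E → E → ℝ) {n k : ℤ} (h : n < k) (x x' : E) :
    backProd M n k x x' = ∑ z, M (n + 1) x z * backProd M (n + 1) k z x' := by
  rw [backProd]; simp [h]

lemma backProd_nonneg {M : ℤ → E → E → ℝ} (hM : ∀ n x x', 0 ≤ M n x x') (n k : ℤ)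
    (x x' : E) : 0 ≤ backProd M n k x x' := by
  rw [backProd]
  split
  · exact Finset.sum_nonneg fun z _ =>
      mul_nonneg (hM _ _ _) (backProd_nonneg hM (n + 1) k z x')
  · split <;> norm_num
termination_by (k - n).toNat

end BackwardProducts

lemma dobrushin_le_of_abs_sub_le {E : Type*} [Fintype E] {K : E → E → ℝ} {r : ℝ}
    (hr : 0 ≤ r) (h : ∀ x x' z, |K x z - K x' z| ≤ r) : dobrushin K ≤ Fintype.card E * r / 2 := by
  refine Real.iSup_le (fun p => ?_) (by positivity)
  have := Finset.sum_le_sum fun z (_ : z ∈ Finset.univ) => h p.1 p.2 z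
  rw [Finset.sum_const, Finset.card_univ, nsmul_eq_mul] at this
  linarith

section NullFibers

open MeasurableSpace

lemma measure_preimage_singleton_eq_zero_of_subset_hull {Ω E : Type*} [MeasurableSpace Ω]
    [Fintype E] {μ : Measure Ω} [IsProbabilityMeasure μ] {f : Ω → E}
    (hsum : ∑ w, μ (f ⁻¹' {w}) ≤ 1) {y y' : E} (hne : y ≠ y')
    (hhull : ∀ H, MeasurableSet H → f ⁻¹' {y'} ⊆ H → f ⁻¹' {y} ⊆ H) :
    μ (f ⁻¹' {y}) = 0 := by
  classical
  set H := toMeasurable μ (f ⁻¹' {y'})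
  set R : Finset E := {y, y'}ᶜ
  have hcover : Set.univ ⊆ H ∪ ⋃ w ∈ R, f ⁻¹' {w} := by
    intro ω _
    by_cases hy : f ω = y
    · exact Or.inl (hhull H (measurableSet_toMeasurable _ _) (subset_toMeasurable _ _) hy)
    by_cases hy' : f ω = y'
    · exact Or.inl (subset_toMeasurable _ _ hy')
    refine Or.inr (Set.mem_biUnion (x := f ω) ?_ rfl)
    simp [R, hy, hy']
  have hle : μ (f ⁻¹' {y}) + 1 ≤ 0 + 1 := calc
    μ (f ⁻¹' {y}) + 1 ≤ μ (f ⁻¹' {y}) + (μ (f ⁻¹' {y'}) + ∑ w ∈ R, μ (f ⁻¹' {w})) := by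
        gcongr
        calc 1 = μ Set.univ := measure_univ.symm
          _ ≤ μ H + μ (⋃ w ∈ R, f ⁻¹' {w}) :=
              (measure_mono hcover).trans (measure_union_le _ _)
          _ ≤ μ (f ⁻¹' {y'}) + ∑ w ∈ R, μ (f ⁻¹' {w}) := by
              rw [measure_toMeasurable]; gcongr; exact measure_biUnion_finset_le _ _
    _ = ∑ w, μ (f ⁻¹' {w}) := by
        rw [← add_assoc, ← Finset.sum_pair (f := fun w => μ (f ⁻¹' {w})) hne,
          Finset.sum_add_sum_compl]
    _ ≤ 0 + 1 := by rwa [zero_add]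
  exact nonpos_iff_eq_zero.1 (ENNReal.le_of_add_le_add_right ENNReal.one_ne_top hle)

lemma preimage_update_apply_eq_self {ι α : Type*} [DecidableEq ι]
    [MeasurableSpace α] {g : α → α} (hg : ∀ s, MeasurableSet s → g ⁻¹' s = s) (i : ι) :
    ∀ S, MeasurableSet S → (fun ω : ι → α => Function.update ω i (g (ω i))) ⁻¹' S = S := by
  set π := fun ω : ι → α => Function.update ω i (g (ω i))
  have hle : (MeasurableSpace.pi : MeasurableSpace (ι → α)) ≤ invariants π :=
    iSup_le fun j => comap_le_iff_le_map.2 fun s hs => ⟨measurable_pi_apply j hs, ?_⟩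
  · exact fun S hS => (hle S hS).2
  ext ω
  rcases eq_or_ne j i with rfl | hji
  · simp [π, ← Set.mem_preimage (f := g), hg s hs]
  · simp [π, hji]

lemma exists_ne_mem_measurableAtom {E : Type*} [MeasurableSpace E] [Countable E] {y : E}
    (hy : ¬ MeasurableSet ({y} : Set E)) : ∃ y' ∈ measurableAtom y, y' ≠ y := by
  by_contra! h
  exact hy (Set.eq_singleton_iff_unique_mem.2 ⟨mem_measurableAtom_self y, h⟩ ▸
    MeasurableSet.measurableAtom_of_countable y)

lemma preimage_swap_eq_self_of_mem_measurableAtom {E : Type*} [MeasurableSpace E]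
    [DecidableEq E] {y y' : E} (hy' : y' ∈ measurableAtom y) :
    ∀ B, MeasurableSet B → Equiv.swap y y' ⁻¹' B = B := by
  intro B hB
  have hiff : y ∈ B ↔ y' ∈ B :=
    ⟨mem_of_mem_measurableAtom hy' hB, fun h => by_contra fun hy =>
      mem_of_mem_measurableAtom hy' hB.compl hy h⟩
  ext z
  rcases eq_or_ne z y with rfl | hzy
  · simp [hiff]
  rcases eq_or_ne z y' with rfl | hzy'
  · simp [hiff]
  · simp [Equiv.swap_apply_of_ne_of_ne hzy hzy']

/-- The fibers `{ω | ω n x = y}` need not be measurable, `E` carrying an arbitrary σ-algebra.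
Those over non-measurable singletons are null: every measurable set is invariant under swapping
the value `y` of the coordinate `(n, x)` with another point `y'` of its measurable atom, so the
measurable hull of the fiber over `y'` also covers the fiber over `y`. -/
lemma measure_coord_eq_zero_of_not_measurableSet {ι E : Type*} [DecidableEq ι] [Fintype E]
    [DecidableEq E] [MeasurableSpace E] {μ : Measure (ι → E → E)} [IsProbabilityMeasure μ]
    (n : ι) (x : E) (hsum : ∑ w, μ {ω | ω n x = w} ≤ 1) {y : E}
    (hy : ¬ MeasurableSet ({y} : Set E)) : μ {ω | ω n x = y} = 0 := by
  obtain ⟨y', hy', hne⟩ := exists_ne_mem_measurableAtom hy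
  refine measure_preimage_singleton_eq_zero_of_subset_hull (f := fun ω : ι → E → E => ω n x)
    hsum hne.symm ?_
  intro H hH hsub ω (hω : ω n x = y)
  rw [← preimage_update_apply_eq_self
    (preimage_update_apply_eq_self (preimage_swap_eq_self_of_mem_measurableAtom hy') x) n H hH]
  apply hsub
  simp [hω]

end NullFibers

section AEMeasurableSetIn

variable {Ω : Type*} {m m' m0 : MeasurableSpace Ω} {μ : Measure[m0] Ω} {s t : Set Ω}

def AEMeasurableSetIn (m : MeasurableSpace Ω) {m0 : MeasurableSpace Ω} (μ : Measure[m0] Ω)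
    (s : Set Ω) : Prop :=
  ∃ t, MeasurableSet[m] t ∧ s =ᵐ[μ] t

lemma MeasurableSet.aemeasurableSetIn (hs : MeasurableSet[m] s) : AEMeasurableSetIn m μ s :=
  ⟨s, hs, EventuallyEq.rfl⟩

lemma aemeasurableSetIn_of_measure_eq_zero (hs : μ s = 0) : AEMeasurableSetIn m μ s :=
  ⟨∅, @MeasurableSet.empty _ m, ae_eq_empty.2 hs⟩

namespace AEMeasurableSetIn

lemma mono (hs : AEMeasurableSetIn m μ s) (hm : m ≤ m') : AEMeasurableSetIn m' μ s :=
  let ⟨t, ht, hst⟩ := hs; ⟨t, hm t ht, hst⟩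

lemma nullMeasurableSet (hs : AEMeasurableSetIn m μ s) (hm : m ≤ m0) : NullMeasurableSet s μ :=
  let ⟨_, ht, hst⟩ := hs; (hm _ ht).nullMeasurableSet.congr hst.symm

lemma inter (hs : AEMeasurableSetIn m μ s) (ht : AEMeasurableSetIn m μ t) :
    AEMeasurableSetIn m μ (s ∩ t) :=
  let ⟨s', hs', hss'⟩ := hs
  let ⟨t', ht', htt'⟩ := ht
  ⟨s' ∩ t', hs'.inter ht', hss'.inter htt'⟩

lemma iUnion {ι : Type*} [Countable ι] {s : ι → Set Ω}
    (hs : ∀ i, AEMeasurableSetIn m μ (s i)) : AEMeasurableSetIn m μ (⋃ i, s i) := by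
  choose t ht hst using hs
  exact ⟨⋃ i, t i, MeasurableSet.iUnion ht, Filter.EventuallyEq.countable_iUnion hst⟩

end AEMeasurableSetIn

lemma ProbabilityTheory.Indep.measure_inter_eq_mul_of_aemeasurableSetIn
    (h : Indep m m' μ) (hs : AEMeasurableSetIn m μ s) (ht : AEMeasurableSetIn m' μ t) :
    μ (s ∩ t) = μ s * μ t := by
  obtain ⟨s', hs', hss'⟩ := hs
  obtain ⟨t', ht', htt'⟩ := ht
  rw [measure_congr hss', measure_congr htt', measure_congr (hss'.inter htt'),
    (Indep_iff _ _ μ).1 h s' t' hs' ht']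

end AEMeasurableSetIn

section Coupling

variable {E : Type*} [MeasurableSpace E]

lemma measurable_coord (n : ℤ) (x : E) : Measurable fun ω : ℤ → E → E => ω n x := by
  fun_prop

variable (E) in
@[reducible] def sigmaAfter (m : ℤ) : MeasurableSpace (ℤ → E → E) :=
  ⨆ p ∈ {q : ℤ × E | m < q.1}, MeasurableSpace.comap (fun ω : ℤ → E → E => ω p.1 p.2) ‹_›

lemma sigmaAfter_le (m : ℤ) : sigmaAfter E m ≤ MeasurableSpace.pi :=
  iSup₂_le fun p _ => (measurable_coord p.1 p.2).comap_le

lemma comap_le_sigmaAfter {m n : ℤ} (hmn : m < n) (x : E) :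
    MeasurableSpace.comap (fun ω : ℤ → E → E => ω n x) ‹_› ≤ sigmaAfter E m :=
  le_iSup₂ (f := fun (p : ℤ × E) (_ : p ∈ {q : ℤ × E | m < q.1}) =>
    MeasurableSpace.comap (fun ω : ℤ → E → E => ω p.1 p.2) ‹_›) (n, x) hmn

lemma sigmaAfter_antitone : Antitone (sigmaAfter E) := fun _ _ hmm' =>
  iSup₂_le fun p hp => comap_le_sigmaAfter (lt_of_le_of_lt hmm' hp) p.2

variable [Fintype E]

structure IsIndepCoupling (M : ℤ → E → E → ℝ) (Q : Measure (ℤ → E → E)) : Prop where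
  nonneg : ∀ n x y, 0 ≤ M n x y
  sum_eq_one : ∀ n x, ∑ y, M n x y = 1
  indep : iIndepFun (fun (p : ℤ × E) (ω : ℤ → E → E) => ω p.1 p.2) Q
  measure_coord : ∀ n x y, Q {ω | ω n x = y} = ENNReal.ofReal (M n x y)

variable {M : ℤ → E → E → ℝ} {Q : Measure (ℤ → E → E)}

namespace IsIndepCoupling

lemma indep_comap_sigmaAfter (hQ : IsIndepCoupling M Q) {n m : ℤ} (hnm : n ≤ m) (x : E) :
    Indep (MeasurableSpace.comap (fun ω : ℤ → E → E => ω n x) ‹_›) (sigmaAfter E m) Q := by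
  have hdisj : Disjoint ({(n, x)} : Set (ℤ × E)) {q | m < q.1} := by
    simpa using hnm
  simpa [sigmaAfter] using
    indep_iSup_of_disjoint (fun p => (measurable_coord p.1 p.2).comap_le) hQ.indep.iIndep hdisj

variable [IsProbabilityMeasure Q]

lemma aemeasurableSetIn_coord (hQ : IsIndepCoupling M Q) (n : ℤ) (x y : E) :
    AEMeasurableSetIn (MeasurableSpace.comap (fun ω : ℤ → E → E => ω n x) ‹_›) Q
      {ω | ω n x = y} := by
  classical
  by_cases hy : MeasurableSet ({y} : Set E)
  · exact MeasurableSet.aemeasurableSetIn ⟨{y}, hy, rfl⟩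
  refine aemeasurableSetIn_of_measure_eq_zero
    (measure_coord_eq_zero_of_not_measurableSet n x ?_ hy)
  simp_rw [hQ.measure_coord, ← ENNReal.ofReal_sum_of_nonneg fun y _ => hQ.nonneg n x y,
    hQ.sum_eq_one, ENNReal.ofReal_one, le_refl]

lemma aemeasurableSetIn_PhiMap (hQ : IsIndepCoupling M Q) {n k : ℤ} (hnk : n ≤ k) (x z : E) :
    AEMeasurableSetIn (sigmaAfter E n) Q {ω | PhiMap ω n k x = z} := by
  induction n, hnk using Int.leInductionDown generalizing x with
  | base => simpa only [PhiMap_self] using (MeasurableSet.const (x = z)).aemeasurableSetIn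
  | pred n hnk ih =>
    rw [setOf_PhiMap_eq_iUnion (by omega), sub_add_cancel]
    exact .iUnion fun y => ((hQ.aemeasurableSetIn_coord n x y).mono
      (comap_le_sigmaAfter (by omega) x)).inter ((ih y).mono (sigmaAfter_antitone (by omega)))

lemma measure_PhiMap [DecidableEq E] (hQ : IsIndepCoupling M Q) {n k : ℤ} (hnk : n ≤ k)
    (x z : E) :
    Q {ω | PhiMap ω n k x = z} = ENNReal.ofReal (backProd M n k x z) := by
  induction n, hnk using Int.leInductionDown generalizing x with
  | base => by_cases hxz : x = z <;> simp [PhiMap_self, backProd_self, hxz]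
  | pred n hnk ih =>
    have hcoord y := hQ.aemeasurableSetIn_coord n x y
    have hfuture y := hQ.aemeasurableSetIn_PhiMap hnk y z
    have hdisj : Pairwise (Function.onFun (AEDisjoint Q)
        fun y => {ω : ℤ → E → E | ω n x = y} ∩ {ω | PhiMap ω n k y = z}) :=
      fun y y' hne => Disjoint.aedisjoint <|
        Set.disjoint_left.2 fun ω h h' => hne (h.1.symm.trans h'.1)
    rw [setOf_PhiMap_eq_iUnion (by omega), backProd_of_lt M (by omega), sub_add_cancel,
      measure_iUnion₀ hdisj fun y => (((hcoord y).mono (measurable_coord n x).comap_le).inter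
        ((hfuture y).mono (sigmaAfter_le n))).nullMeasurableSet le_rfl,
      tsum_fintype, ENNReal.ofReal_sum_of_nonneg fun y _ =>
        mul_nonneg (hQ.nonneg _ _ _) (backProd_nonneg hQ.nonneg _ _ _ _)]
    refine Finset.sum_congr rfl fun y _ => ?_
    rw [(hQ.indep_comap_sigmaAfter le_rfl x).measure_inter_eq_mul_of_aemeasurableSetIn
      (hcoord y) (hfuture y), hQ.measure_coord, ih, ENNReal.ofReal_mul (hQ.nonneg _ _ _)]

end IsIndepCoupling

end Coupling

section Coalescence

variable {E : Type*}

def coalescenceSet (n k : ℤ) : Set (ℤ → E → E) := {ω | ∃ c, ∀ x, PhiMap ω n k x = c}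

lemma coalescenceSet_subset {m n k : ℤ} (hmn : m ≤ n) (hnk : n ≤ k) :
    (coalescenceSet n k : Set (ℤ → E → E)) ⊆ coalescenceSet m k := by
  rintro ω ⟨c, hc⟩
  exact ⟨c, fun x => by rw [PhiMap_comp ω hnk m hmn, hc]⟩

variable [MeasurableSpace E] {Q : Measure (ℤ → E → E)} [IsProbabilityMeasure Q]

lemma tendsto_measureReal_coalescenceSet {k : ℤ}
    (hcoal : Q {ω | ∃ m < k, ∃ c, ∀ x, PhiMap ω m k x = c} = 1) :
    Tendsto (fun n => Q.real (coalescenceSet n k)) atBot (𝓝 1) := by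
  have hanti : Antitone fun n => (coalescenceSet (min n k) k : Set (ℤ → E → E)) :=
    fun n n' h => coalescenceSet_subset (min_le_min_right k h) (min_le_right _ _)
  have hunion : Q (⋃ n, coalescenceSet (min n k) k) = 1 := by
    refine le_antisymm prob_le_one (hcoal ▸ measure_mono ?_)
    rintro ω ⟨m, hmk, hm⟩
    exact Set.mem_iUnion.2 ⟨m, by rwa [min_eq_left hmk.le]⟩
  have hlim := (ENNReal.tendsto_toReal ENNReal.one_ne_top).comp
    (hunion ▸ tendsto_measure_iUnion_atBot (μ := Q) hanti)
  refine (ENNReal.toReal_one ▸ hlim).congr' ?_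
  filter_upwards [eventually_le_atBot k] with n hnk
  simp [measureReal_def, min_eq_left hnk]

variable [Fintype E] {M : ℤ → E → E → ℝ}

namespace IsIndepCoupling

lemma nullMeasurableSet_coalescenceSet (hQ : IsIndepCoupling M Q) {n k : ℤ} (hnk : n ≤ k) :
    NullMeasurableSet (coalescenceSet n k) Q := by
  have : (coalescenceSet n k : Set (ℤ → E → E)) = ⋃ c, ⋂ x, {ω | PhiMap ω n k x = c} := by
    ext
    simp [coalescenceSet]
  rw [this]
  exact .iUnion fun c => .iInter fun x =>
    (hQ.aemeasurableSetIn_PhiMap hnk x c).nullMeasurableSet (sigmaAfter_le n)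

variable [DecidableEq E]

lemma abs_backProd_sub_le (hQ : IsIndepCoupling M Q) {n k : ℤ} (hnk : n ≤ k) (x x' z : E) :
    |backProd M n k x z - backProd M n k x' z| ≤ 1 - Q.real (coalescenceSet n k) := by
  have hlaw : ∀ x, backProd M n k x z = Q.real {ω | PhiMap ω n k x = z} := fun x => by
    rw [measureReal_def, hQ.measure_PhiMap hnk,
      ENNReal.toReal_ofReal (backProd_nonneg hQ.nonneg _ _ _ _)]
  have key : ∀ a b : E,
      backProd M n k a z ≤ backProd M n k b z + (1 - Q.real (coalescenceSet n k)) := by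
    intro a b
    rw [hlaw, hlaw, ← probReal_compl_eq_one_sub₀ (hQ.nullMeasurableSet_coalescenceSet hnk)]
    refine (measureReal_mono ?_).trans (measureReal_union_le _ _)
    intro ω (hω : PhiMap ω n k a = z)
    by_cases hc : ω ∈ coalescenceSet n k
    · obtain ⟨c, hc⟩ := hc
      exact Or.inl (show PhiMap ω n k b = z by rw [hc, ← hc a, hω])
    · exact Or.inr hc
  rw [abs_sub_le_iff]
  constructor <;> linarith [key x x', key x' x]

lemma tendsto_backProd_sub (hQ : IsIndepCoupling M Q) {k : ℤ}
    (hcoal : Q {ω | ∃ m < k, ∃ c, ∀ x, PhiMap ω m k x = c} = 1) (x x' z : E) :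
    Tendsto (fun n => backProd M n k x z - backProd M n k x' z) atBot (𝓝 0) := by
  refine squeeze_zero_norm' ?_
    (by simpa using (tendsto_measureReal_coalescenceSet hcoal).const_sub 1)
  filter_upwards [eventually_le_atBot k] with n hnk
  exact hQ.abs_backProd_sub_le hnk x x' z

lemma dobrushin_backProd_le (hQ : IsIndepCoupling M Q) {n k : ℤ} (hnk : n ≤ k) :
    dobrushin (backProd M n k) ≤ Fintype.card E * (1 - Q.real (coalescenceSet n k)) / 2 :=
  dobrushin_le_of_abs_sub_le (sub_nonneg.2 measureReal_le_one) (hQ.abs_backProd_sub_le hnk)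

end IsIndepCoupling

end Coalescence

lemma exists_strictAnti_seq_of_forall_exists_lt {α : Type*} [Preorder α] {S : Set α}
    {P : α → α → Prop} (h : ∀ k ∈ S, ∃ m ∈ S, m < k ∧ P m k) {a : α} (ha : a ∈ S) :
    ∃ ns : ℕ → α, StrictAnti ns ∧ (∀ i, ns i ∈ S) ∧ ∀ i, P (ns (i + 1)) (ns i) := by
  choose! f hfS hflt hP using h
  have hmem : ∀ i, f^[i] a ∈ S := fun i => by
    induction i with
    | zero => exact ha
    | succ i ih => rw [Function.iterate_succ_apply']; exact hfS _ ih
  refine ⟨fun i => f^[i] a, strictAnti_nat_of_succ_lt fun i => ?_, hmem, fun i => ?_⟩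
  · simpa only [Function.iterate_succ_apply'] using hflt _ (hmem i)
  · simpa only [Function.iterate_succ_apply'] using hP _ (hmem i)

lemma tendsto_sum_range_atTop_of_const_le {f : ℕ → ℝ} {c : ℝ} (hc : 0 < c)
    (hf : ∀ i, c ≤ f i) : Tendsto (fun N => ∑ i ∈ Finset.range N, f i) atTop atTop := by
  refine tendsto_atTop_mono (fun N => ?_) (tendsto_natCast_atTop_atTop.atTop_mul_const hc)
  simpa using Finset.sum_le_sum fun i (_ : i ∈ Finset.range N) => hf i

theorem as_coalescence_implies_weak_ergodicity_general {E : Type*} [Fintype E]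
    [DecidableEq E] [MeasurableSpace E]
    (M : ℤ → E → E → ℝ) (hM0 : ∀ n x x', 0 ≤ M n x x') (hM1 : ∀ n x, ∑ x', M n x x' = 1)
    (Q : Measure (ℤ → E → E)) [IsProbabilityMeasure Q]
    (hind : iIndepFun (fun (p : ℤ × E) (ω : ℤ → E → E) => ω p.1 p.2) Q)
    (hmarg : ∀ (n : ℤ) (x x' : E), Q {ω | ω n x = x'} = ENNReal.ofReal (M n x x'))
    (hcoal : ∀ n ≤ (0 : ℤ), Q {ω | ∃ m < n, ∃ c, ∀ x, PhiMap ω m n x = c} = 1) :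
    (∃ ns : ℕ → ℤ, StrictAnti ns ∧ (∀ i, ns i ≤ 0) ∧
      Tendsto (fun N => ∑ i ∈ Finset.range N,
        (1 - dobrushin (backProd M (ns (i + 1)) (ns i)))) atTop atTop)
    ∧ ∀ k ≤ (0 : ℤ), ∀ x x' z : E,
        Tendsto (fun n : ℤ => backProd M n k x z - backProd M n k x' z) atBot (nhds 0) := by
  have hQ : IsIndepCoupling M Q := ⟨hM0, hM1, hind, hmarg⟩
  refine ⟨?_, fun k hk x x' z => hQ.tendsto_backProd_sub (hcoal k hk) x x' z⟩
  set ε : ℝ := 1 / (Fintype.card E + 1)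
  have hcard : Fintype.card E * ε ≤ 1 := by
    rw [mul_one_div, div_le_one (by positivity)]
    linarith
  -- on each block `[m, k]` chosen below, `β(M_{m,k}) ≤ |E| ε / 2 ≤ 1 / 2`
  have hblock : ∀ k ∈ Set.Iic (0 : ℤ), ∃ m ∈ Set.Iic (0 : ℤ), m < k ∧
      1 - ε < Q.real (coalescenceSet m k) := fun k hk =>
    let ⟨m, hm, hmk⟩ := (((tendsto_measureReal_coalescenceSet (hcoal k hk)).eventually_const_lt
      (sub_lt_self 1 (by positivity))).and (eventually_lt_atBot k)).exists
    ⟨m, hmk.le.trans hk, hmk, hm⟩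
  obtain ⟨ns, hanti, hns, hblk⟩ :=
    exists_strictAnti_seq_of_forall_exists_lt hblock (Set.mem_Iic.2 le_rfl)
  refine ⟨ns, hanti, hns, tendsto_sum_range_atTop_of_const_le one_half_pos fun i => ?_⟩
  have hβ := hQ.dobrushin_backProd_le (hanti (Nat.lt_succ_self i)).le
  have := mul_le_mul_of_nonneg_left (sub_lt_comm.1 (hblk i)).le
    (Nat.cast_nonneg (Fintype.card E))
  linarith

/-- If under the independent coupling every coalescence time is a.s. finite, then
there is a strictly decreasing sequence `(n_i)` of nonpositive integers with
`∑_i (1 − β(M_{n_{i+1},n_i})) = ∞`; consequently the backward products of `M`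
are weakly ergodic. -/
theorem as_coalescence_implies_weak_ergodicity {E : Type*} [Fintype E] [Nonempty E]
    [DecidableEq E] [MeasurableSpace E]
    (M : ℤ → E → E → ℝ) (hM0 : ∀ n x x', 0 ≤ M n x x') (hM1 : ∀ n x, ∑ x', M n x x' = 1)
    (Q : Measure (ℤ → E → E)) [IsProbabilityMeasure Q]
    (hind : iIndepFun (fun (p : ℤ × E) (ω : ℤ → E → E) => ω p.1 p.2) Q)
    (hmarg : ∀ (n : ℤ) (x x' : E), Q {ω | ω n x = x'} = ENNReal.ofReal (M n x x'))
    (hcoal : ∀ n ≤ (0 : ℤ), Q {ω | ∃ m < n, ∃ c, ∀ x, PhiMap ω m n x = c} = 1) :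
    (∃ ns : ℕ → ℤ, StrictAnti ns ∧ (∀ i, ns i ≤ 0) ∧
      Tendsto (fun N => ∑ i ∈ Finset.range N,
        (1 - dobrushin (backProd M (ns (i + 1)) (ns i)))) atTop atTop)
    ∧ ∀ k ≤ (0 : ℤ), ∀ x x' z : E,
        Tendsto (fun n : ℤ => backProd M n k x z - backProd M n k x' z) atBot (nhds 0) :=
  as_coalescence_implies_weak_ergodicity_general M hM0 hM1 Q hind hmarg hcoal
end

section
/- Suppose the tail σ-algebra of a nonhomogeneous Markov chain with kernels M^y on finite E is not trivial under the law P^y (i.e., there is a tail event of probability strictly between 0 and 1). Then the conditional distributions x ↦ P^y(X̃_k = x | tail σ-algebra) form, for each version, a sequence of absolute probabilities for M^y satisfying ∑_{x'} P^y(X̃_{k−1} = x' | tail) M_k^y(x', x) = P^y(X̃_k = x | tail) almost surely; consequently M^y admits more than one sequence of absolute probabilities. -/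
/-!
Since the tail σ-algebra lies inside every past `σ(X_j ; j ≤ k - 1)`, the tower property lets the
Markov step `P(X_k = x | past) = M_k(X_{k-1}, x)` pass to conditioning on the tail, which gives the
recursion.

For a tail event `A` with `0 < P A < 1`, the conditional law `P(· | A)` is again the law of a
Markov chain with kernels `M`, because `A` belongs to every past σ-algebra. Both `P` and `P(· | A)`
therefore have absolute-probability sequences as marginals. If these agreed, peeling off the top
coordinate with the Markov property would make the two laws agree on all cylinders, hence on
`σ(X_j ; j ≤ 0) ∋ A`, and `1 = P(A | A) = P A` would follow.
-/

open scoped BigOperators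
open MeasureTheory Filter

/-- A sequence of absolute probabilities for the kernels `M` (on nonpositive times). -/
def IsAbsProbSeq {E : Type*} [Fintype E] (M : ℤ → E → E → ℝ) (π : ℤ → E → ℝ) : Prop :=
  ∀ n ≤ (0 : ℤ), (∀ x, 0 ≤ π n x) ∧ (∑ x, π n x = 1) ∧
    ∀ x, ∑ z, π (n - 1) z * M n z x = π n x

def coordSigmaLE (E : Type*) [MeasurableSpace E] (n : ℤ) : MeasurableSpace (ℤ → E) :=
  ⨆ k ∈ Set.Iic n, MeasurableSpace.comap (fun ω : ℤ → E => ω k) inferInstance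

def tailSigma (E : Type*) [MeasurableSpace E] : MeasurableSpace (ℤ → E) :=
  ⨅ n : ℤ, coordSigmaLE E n

def coordSigma (E : Type*) [MeasurableSpace E] (j : ℤ) : MeasurableSpace (ℤ → E) :=
  MeasurableSpace.comap (fun ω : ℤ → E => ω j) inferInstance

noncomputable def coordIndicator {E : Type*} (k : ℤ) (x : E) : (ℤ → E) → ℝ :=
  Set.indicator {ω | ω k = x} fun _ => 1

section Coordinates

variable {E : Type*}

lemma coordIndicator_apply [DecidableEq E] (k : ℤ) (x : E) (ω : ℤ → E) :
    coordIndicator k x ω = if ω k = x then 1 else 0 := by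
  simp [coordIndicator, Set.indicator_apply]

lemma coordIndicator_nonneg (k : ℤ) (x : E) (ω : ℤ → E) : 0 ≤ coordIndicator k x ω :=
  Set.indicator_nonneg (fun _ _ => zero_le_one) ω

lemma sum_mul_coordIndicator [Fintype E] (k : ℤ) (ω : ℤ → E) (F : E → ℝ) :
    ∑ x, F x * coordIndicator k x ω = F (ω k) := by
  classical
  simp [coordIndicator_apply]

lemma sum_coordIndicator [Fintype E] (k : ℤ) (ω : ℤ → E) : ∑ x, coordIndicator k x ω = 1 := by
  simpa using sum_mul_coordIndicator k ω fun _ => 1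

variable [MeasurableSpace E]

lemma setIntegral_inter_preimage_coordIndicator {μ : Measure (ℤ → E)} (B : Set (ℤ → E))
    {m : ℤ} {S : Set E} (hS : MeasurableSet S) (z : E) :
    ∫ ω in B ∩ (fun ω => ω m) ⁻¹' S, coordIndicator m z ω ∂μ
      = S.indicator (fun _ => 1) z * ∫ ω in B, coordIndicator m z ω ∂μ := by
  rw [← setIntegral_indicator (measurable_pi_apply m hS), ← integral_const_mul]
  congr 1 with ω
  classical
  by_cases h : ω m = z <;> simp [coordIndicator_apply, Set.indicator_apply, h]

lemma coordSigmaLE_le_pi (n : ℤ) : coordSigmaLE E n ≤ MeasurableSpace.pi :=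
  iSup₂_le fun k _ => (measurable_pi_apply k).comap_le

lemma tailSigma_le_coordSigmaLE (n : ℤ) : tailSigma E ≤ coordSigmaLE E n :=
  iInf_le _ n

lemma measurableSet_coordSigmaLE_biInter {n : ℤ} {t : Finset ℤ} (ht : ∀ j ∈ t, j ≤ n)
    {f : ℤ → Set (ℤ → E)} (hf : ∀ j ∈ t, MeasurableSet[coordSigma E j] (f j)) :
    MeasurableSet[coordSigmaLE E n] (⋂ j ∈ t, f j) :=
  Finset.measurableSet_biInter t fun j hj =>
    le_iSup₂ (f := fun k (_ : k ∈ Set.Iic n) => coordSigma E k) j (ht j hj) _ (hf j hj)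

end Coordinates

theorem integrable_of_ae_sum_condExp_eq_one {Ω ι : Type*} [Fintype ι] {m mΩ : MeasurableSpace Ω}
    {μ : Measure Ω} [IsProbabilityMeasure μ] (hm : m ≤ mΩ) {f : ι → Ω → ℝ}
    (hf0 : ∀ i ω, 0 ≤ f i ω) (hf1 : ∀ ω, ∑ i, f i ω = 1)
    (hcond : ∀ᵐ ω ∂μ, ∑ i, μ[f i | m] ω = 1) (i : ι) : Integrable (f i) μ := by
  -- The non-integrable parts have conditional expectation `0`, so the integrable ones already
  -- carry total mass `1`; what they miss, `g`, is a nonnegative function of integral `0`.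
  classical
  set S := Finset.univ.filter fun j => Integrable (f j) μ
  have hS : ∀ j ∈ S, Integrable (f j) μ := fun j hj => (Finset.mem_filter.1 hj).2
  have hsum_le : ∀ (T : Finset ι) ω, ∑ j ∈ T, f j ω ≤ 1 := fun T ω =>
    hf1 ω ▸ Finset.sum_le_sum_of_subset_of_nonneg (Finset.subset_univ T) fun j _ _ => hf0 j ω
  have hcondS : ∀ᵐ ω ∂μ, ∑ j ∈ S, μ[f j | m] ω = 1 := by
    filter_upwards [hcond] with ω hω
    rw [← hω]
    refine Finset.sum_subset (Finset.subset_univ S) fun j _ hj => ?_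
    rw [condExp_of_not_integrable fun h => hj (Finset.mem_filter.2 ⟨Finset.mem_univ j, h⟩)]
    rfl
  set g := fun ω => 1 - ∑ j ∈ S, f j ω
  have hg_int : Integrable g μ := (integrable_const 1).sub (integrable_finsetSum S hS)
  have hg_integral : ∫ ω, g ω ∂μ = 0 := by
    have : ∑ j ∈ S, ∫ ω, μ[f j | m] ω ∂μ = 1 := by
      rw [← integral_finsetSum S fun j _ => integrable_condExp, integral_congr_ae hcondS]
      simp
    simp only [g]
    rw [integral_sub (integrable_const 1) (integrable_finsetSum S hS),
      integral_finsetSum S hS, ← this]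
    simp [integral_condExp hm]
  have hg_zero : g =ᵐ[μ] 0 :=
    (integral_eq_zero_iff_of_nonneg (fun ω => sub_nonneg.2 (hsum_le S ω)) hg_int).1 hg_integral
  by_cases hi : i ∈ S
  · exact hS i hi
  refine (integrable_zero Ω ℝ μ).congr ?_
  filter_upwards [hg_zero] with ω hω
  have := hsum_le (insert i S) ω
  rw [Finset.sum_insert hi] at this
  simp only [g, Pi.zero_apply] at hω ⊢
  linarith [hf0 i ω]

section MarkovLaw

variable {E : Type*} [Fintype E] [MeasurableSpace E] {M : ℤ → E → E → ℝ}

/-- The Markov property with kernels `M` at times `k ≤ 0`, in integrated form: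
`μ(B ∩ {X_k = x}) = ∑_z μ(B ∩ {X_{k-1} = z}) M_k(z, x)` for `B ∈ σ(X_j ; j ≤ k - 1)`. -/
structure IsMarkovLaw (M : ℤ → E → E → ℝ) (μ : Measure (ℤ → E)) : Prop where
  integrable : ∀ k ≤ (0 : ℤ), ∀ x, Integrable (coordIndicator k x) μ
  setIntegral_eq : ∀ k ≤ (0 : ℤ), ∀ x B, MeasurableSet[coordSigmaLE E (k - 1)] B →
    ∫ ω in B, coordIndicator k x ω ∂μ = ∑ z, M k z x * ∫ ω in B, coordIndicator (k - 1) z ω ∂μ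

theorem isMarkovLaw_of_condExp {P : Measure (ℤ → E)} [IsProbabilityMeasure P]
    (hM1 : ∀ n x, ∑ x', M n x x' = 1)
    (hMarkov : ∀ k ≤ (0 : ℤ), ∀ x : E,
      P[coordIndicator k x | coordSigmaLE E (k - 1)] =ᵐ[P] fun ω => M k (ω (k - 1)) x) :
    IsMarkovLaw M P := by
  -- Singletons of `E` need not be measurable: integrability of the coordinate indicators
  -- has to be extracted from the Markov hypothesis.
  have hint : ∀ k ≤ (0 : ℤ), ∀ x, Integrable (coordIndicator k x) P := by
    intro k hk
    refine integrable_of_ae_sum_condExp_eq_one (coordSigmaLE_le_pi (k - 1))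
      (coordIndicator_nonneg k) (sum_coordIndicator k) ?_
    filter_upwards [ae_all_iff.2 (hMarkov k hk)] with ω hω
    simp only [hω, hM1]
  refine ⟨hint, fun k hk x B hB => ?_⟩
  have hint' : ∀ z, Integrable (coordIndicator (k - 1) z) P := hint (k - 1) (by omega)
  calc ∫ ω in B, coordIndicator k x ω ∂P
      = ∫ ω in B, M k (ω (k - 1)) x ∂P := by
        rw [← setIntegral_condExp (coordSigmaLE_le_pi (k - 1)) (hint k hk x) hB]
        exact integral_congr_ae (ae_restrict_of_ae (hMarkov k hk x))
    _ = ∫ ω in B, ∑ z, M k z x * coordIndicator (k - 1) z ω ∂P := by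
        simp only [sum_mul_coordIndicator]
    _ = ∑ z, M k z x * ∫ ω in B, coordIndicator (k - 1) z ω ∂P := by
        rw [integral_finsetSum _ fun z _ => ((hint' z).const_mul _).integrableOn]
        simp only [integral_const_mul]

namespace IsMarkovLaw

variable {μ ν : Measure (ℤ → E)}

theorem isAbsProbSeq [IsProbabilityMeasure μ] (h : IsMarkovLaw M μ) :
    IsAbsProbSeq M fun n x => ∫ ω, coordIndicator n x ω ∂μ := by
  intro n hn
  refine ⟨fun x => integral_nonneg (coordIndicator_nonneg n x), ?_, fun x => ?_⟩
  · rw [← integral_finsetSum _ fun x _ => h.integrable n hn x]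
    simp [sum_coordIndicator]
  · simpa [mul_comm] using (h.setIntegral_eq n hn x Set.univ MeasurableSet.univ).symm

theorem cond (h : IsMarkovLaw M μ) {A : Set (ℤ → E)} (hA : MeasurableSet[tailSigma E] A) :
    IsMarkovLaw M (ProbabilityTheory.cond μ A) := by
  have setIntegral_cond : ∀ {k} (f : (ℤ → E) → ℝ) {B}, MeasurableSet[coordSigmaLE E k] B →
      ∫ ω in B, f ω ∂(ProbabilityTheory.cond μ A) = (μ A)⁻¹.toReal * ∫ ω in B ∩ A, f ω ∂μ :=
    fun f B hB => by
      rw [ProbabilityTheory.cond, Measure.restrict_smul,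
        Measure.restrict_restrict (coordSigmaLE_le_pi _ B hB), integral_smul_measure, smul_eq_mul]
  refine ⟨fun k hk x => ?_, fun k hk x B hB => ?_⟩
  · refine .of_bound ((h.integrable k hk x).1.mono_ac ProbabilityTheory.cond_absolutelyContinuous)
      1 (ae_of_all _ fun ω => ?_)
    rw [Real.norm_of_nonneg (coordIndicator_nonneg k x ω)]
    exact Set.indicator_le_self' (fun _ _ => zero_le_one) ω
  · have hBA := hB.inter (tailSigma_le_coordSigmaLE _ A hA)
    simp only [setIntegral_cond _ hB, h.setIntegral_eq k hk x _ hBA, Finset.mul_sum, mul_left_comm]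

theorem measureReal_eq_sum_setIntegral [IsFiniteMeasure μ] (h : IsMarkovLaw M μ) {k : ℤ}
    (hk : k ≤ 0) (s : Set (ℤ → E)) :
    μ.real s = ∑ z, ∫ ω in s, coordIndicator k z ω ∂μ := by
  rw [← integral_finsetSum _ fun z _ => (h.integrable k hk z).integrableOn]
  simp [sum_coordIndicator]

theorem setIntegral_biInter_coordIndicator_eq (hμ : IsMarkovLaw M μ) (hν : IsMarkovLaw M ν)
    (hmarg : ∀ n ≤ (0 : ℤ), ∀ x, ∫ ω, coordIndicator n x ω ∂μ = ∫ ω, coordIndicator n x ω ∂ν)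
    (d : ℕ) {m : ℤ} (hm : m ≤ 0) {t : Finset ℤ}
    (ht : ∀ j ∈ t, m - d < j ∧ j ≤ m) {f : ℤ → Set (ℤ → E)}
    (hf : ∀ j ∈ t, MeasurableSet[coordSigma E j] (f j)) (z : E) :
    ∫ ω in ⋂ j ∈ t, f j, coordIndicator m z ω ∂μ
      = ∫ ω in ⋂ j ∈ t, f j, coordIndicator m z ω ∂ν := by
  induction d generalizing m t z with
  | zero =>
    obtain rfl : t = ∅ := Finset.eq_empty_of_forall_notMem fun j hj => by
      have := ht j hj
      omega
    simpa using hmarg m hm z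
  | succ d ih =>
    have herase : ∀ j ∈ t.erase m, m - 1 - d < j ∧ j ≤ m - 1 := fun j hj => by
      have := ht j (Finset.mem_of_mem_erase hj)
      have := Finset.ne_of_mem_erase hj
      omega
    have hf' : ∀ j ∈ t.erase m, MeasurableSet[coordSigma E j] (f j) :=
      fun j hj => hf j (Finset.mem_of_mem_erase hj)
    have hrest : ∀ w, ∫ ω in ⋂ j ∈ t.erase m, f j, coordIndicator (m - 1) w ω ∂μ
        = ∫ ω in ⋂ j ∈ t.erase m, f j, coordIndicator (m - 1) w ω ∂ν :=
      ih (by omega) herase hf'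
    have hB : MeasurableSet[coordSigmaLE E (m - 1)] (⋂ j ∈ t.erase m, f j) :=
      measurableSet_coordSigmaLE_biInter (fun j hj => (herase j hj).2) hf'
    have hpeel : ∫ ω in ⋂ j ∈ t.erase m, f j, coordIndicator m z ω ∂μ
        = ∫ ω in ⋂ j ∈ t.erase m, f j, coordIndicator m z ω ∂ν := by
      simp only [hμ.setIntegral_eq m hm z _ hB, hν.setIntegral_eq m hm z _ hB, hrest]
    by_cases hmt : m ∈ t
    · obtain ⟨S, hS, hSf⟩ := MeasurableSpace.measurableSet_comap.1 (hf m hmt)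
      have hsplit : ⋂ j ∈ t, f j = (⋂ j ∈ t.erase m, f j) ∩ (fun ω => ω m) ⁻¹' S := by
        conv_lhs => rw [← Finset.insert_erase hmt]
        rw [Finset.set_biInter_insert, hSf, Set.inter_comm]
      rw [hsplit, setIntegral_inter_preimage_coordIndicator _ hS,
        setIntegral_inter_preimage_coordIndicator _ hS, hpeel]
    · rwa [Finset.erase_eq_of_notMem hmt] at hpeel

theorem measure_eq_of_marginal_eq [IsFiniteMeasure μ] [IsFiniteMeasure ν] (hμ : IsMarkovLaw M μ)
    (hν : IsMarkovLaw M ν)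
    (hmarg : ∀ n ≤ (0 : ℤ), ∀ x, ∫ ω, coordIndicator n x ω ∂μ = ∫ ω, coordIndicator n x ω ∂ν)
    {U : Set (ℤ → E)}
    (hU : MeasurableSet[coordSigmaLE E 0] U) : μ U = ν U := by
  set C := piiUnionInter (fun k => {s | MeasurableSet[coordSigma E k] s}) (Set.Iic 0)
  have hgen : coordSigmaLE E 0 = MeasurableSpace.generateFrom C :=
    (generateFrom_piiUnionInter_measurableSet (coordSigma E) _).symm
  have hC : ∀ s ∈ C, μ s = ν s := by
    rintro - ⟨t, ht, f, hf, rfl⟩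
    obtain ⟨b, hb⟩ := t.bddBelow
    have hcyl : ∀ z, ∫ ω in ⋂ j ∈ t, f j, coordIndicator 0 z ω ∂μ
        = ∫ ω in ⋂ j ∈ t, f j, coordIndicator 0 z ω ∂ν :=
      setIntegral_biInter_coordIndicator_eq hμ hν hmarg (1 - b).toNat le_rfl
        (fun j hj => ⟨by have := hb hj; omega, ht hj⟩) hf
    rw [← ENNReal.toReal_eq_toReal_iff' (measure_ne_top _ _) (measure_ne_top _ _)]
    simp only [← measureReal_def, hμ.measureReal_eq_sum_setIntegral le_rfl,
      hν.measureReal_eq_sum_setIntegral le_rfl, hcyl]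
  have htrim : μ.trim (coordSigmaLE_le_pi 0) = ν.trim (coordSigmaLE_le_pi 0) := by
    refine ext_of_generate_finite C hgen (isPiSystem_piiUnionInter _
      (fun k => @MeasurableSpace.isPiSystem_measurableSet _ (coordSigma E k)) _)
      (fun s hs => ?_) ?_
    · have hs' : MeasurableSet[coordSigmaLE E 0] s := hgen ▸ .basic s hs
      rw [trim_measurableSet_eq _ hs', trim_measurableSet_eq _ hs', hC s hs]
    · rw [trim_measurableSet_eq _ .univ, trim_measurableSet_eq _ .univ]
      exact hC _ ⟨∅, by simp, fun _ => Set.univ, by simp, by simp⟩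
  rw [← trim_measurableSet_eq (coordSigmaLE_le_pi 0) hU, htrim, trim_measurableSet_eq _ hU]

end IsMarkovLaw

end MarkovLaw

theorem sum_condExp_coordIndicator_mul_ae_eq {E : Type*} [Fintype E] [MeasurableSpace E]
    {M : ℤ → E → E → ℝ} {P : Measure (ℤ → E)} [IsFiniteMeasure P] {k : ℤ} {x : E}
    (hMarkov : P[coordIndicator k x | coordSigmaLE E (k - 1)] =ᵐ[P] fun ω => M k (ω (k - 1)) x)
    (hint : ∀ x', Integrable (coordIndicator (k - 1) x') P)
    {m : MeasurableSpace (ℤ → E)} (hm : m ≤ coordSigmaLE E (k - 1)) :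
    (fun ω => ∑ x', P[coordIndicator (k - 1) x' | m] ω * M k x' x)
      =ᵐ[P] P[coordIndicator k x | m] := by
  have hkernel : (fun ω : ℤ → E => M k (ω (k - 1)) x)
      = ∑ x', M k x' x • coordIndicator (k - 1) x' := by
    ext ω
    simp [sum_mul_coordIndicator]
  calc (fun ω => ∑ x', P[coordIndicator (k - 1) x' | m] ω * M k x' x)
      = ∑ x', M k x' x • P[coordIndicator (k - 1) x' | m] := by
        ext ω
        simp [mul_comm]
    _ =ᵐ[P] ∑ x', P[M k x' x • coordIndicator (k - 1) x' | m] :=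
        eventuallyEq_sum fun x' _ => (condExp_smul _ _ m).symm
    _ =ᵐ[P] P[fun ω => M k (ω (k - 1)) x | m] := by
        rw [hkernel]
        exact (condExp_finsetSum (fun x' _ => (hint x').smul _) m).symm
    _ =ᵐ[P] P[P[coordIndicator k x | coordSigmaLE E (k - 1)] | m] := condExp_congr_ae hMarkov.symm
    _ =ᵐ[P] P[coordIndicator k x | m] := condExp_condExp_of_le hm (coordSigmaLE_le_pi _)

theorem nontrivial_tail_conditional_absolute_probabilities_general {E : Type*} [Fintype E]
    [MeasurableSpace E]
    (M : ℤ → E → E → ℝ) (hM1 : ∀ n x, ∑ x', M n x x' = 1)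
    (P : Measure (ℤ → E)) [IsProbabilityMeasure P]
    (hMarkov : ∀ k ≤ (0 : ℤ), ∀ x : E,
      (P[Set.indicator {ω : ℤ → E | ω k = x} (fun _ => (1 : ℝ)) | coordSigmaLE E (k - 1)])
        =ᵐ[P] fun ω => M k (ω (k - 1)) x)
    (hTail : ∃ A : Set (ℤ → E), MeasurableSet[tailSigma E] A ∧ 0 < P A ∧ P A < 1) :
    (∀ k ≤ (0 : ℤ), ∀ x : E,
      (fun ω => ∑ x' : E,
          (P[Set.indicator {ω' : ℤ → E | ω' (k - 1) = x'} (fun _ => (1 : ℝ)) | tailSigma E]) ω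
            * M k x' x)
        =ᵐ[P] (P[Set.indicator {ω' : ℤ → E | ω' k = x} (fun _ => (1 : ℝ)) | tailSigma E]))
    ∧ ∃ π π' : ℤ → E → ℝ, IsAbsProbSeq M π ∧ IsAbsProbSeq M π' ∧
        ∃ n ≤ (0 : ℤ), π n ≠ π' n := by
  have hP : IsMarkovLaw M P := isMarkovLaw_of_condExp hM1 hMarkov
  refine ⟨fun k hk x => sum_condExp_coordIndicator_mul_ae_eq (hMarkov k hk x)
    (hP.integrable (k - 1) (by omega)) (tailSigma_le_coordSigmaLE _), ?_⟩
  obtain ⟨A, hAt, hA0, hA1⟩ := hTail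
  have := ProbabilityTheory.cond_isProbabilityMeasure (μ := P) hA0.ne'
  have hPA := hP.cond hAt
  refine ⟨_, _, hP.isAbsProbSeq, hPA.isAbsProbSeq, ?_⟩
  by_contra! hsame
  have hA : ProbabilityTheory.cond P A A = P A :=
    hPA.measure_eq_of_marginal_eq hP (fun n hn x => congr_fun (hsame n hn).symm x)
      (tailSigma_le_coordSigmaLE 0 A hAt)
  rw [ProbabilityTheory.cond_apply_self hA0.ne' (measure_ne_top P A)] at hA
  exact hA1.ne hA.symm

/-- If the tail σ-algebra of a nonhomogeneous Markov chain with kernels `M` is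
nontrivial under its law `P`, then the conditional distributions given the tail
σ-algebra satisfy the absolute-probability recursion almost surely; consequently
`M` admits more than one sequence of absolute probabilities. -/
theorem nontrivial_tail_conditional_absolute_probabilities {E : Type*} [Fintype E]
    [Nonempty E] [MeasurableSpace E]
    (M : ℤ → E → E → ℝ) (hM0 : ∀ n x x', 0 ≤ M n x x') (hM1 : ∀ n x, ∑ x', M n x x' = 1)
    (P : Measure (ℤ → E)) [IsProbabilityMeasure P]
    (hMarkov : ∀ k ≤ (0 : ℤ), ∀ x : E,
      (P[Set.indicator {ω : ℤ → E | ω k = x} (fun _ => (1 : ℝ)) | coordSigmaLE E (k - 1)])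
        =ᵐ[P] fun ω => M k (ω (k - 1)) x)
    (hTail : ∃ A : Set (ℤ → E), MeasurableSet[tailSigma E] A ∧ 0 < P A ∧ P A < 1) :
    (∀ k ≤ (0 : ℤ), ∀ x : E,
      (fun ω => ∑ x' : E,
          (P[Set.indicator {ω' : ℤ → E | ω' (k - 1) = x'} (fun _ => (1 : ℝ)) | tailSigma E]) ω
            * M k x' x)
        =ᵐ[P] (P[Set.indicator {ω' : ℤ → E | ω' k = x} (fun _ => (1 : ℝ)) | tailSigma E]))
    ∧ ∃ π π' : ℤ → E → ℝ, IsAbsProbSeq M π ∧ IsAbsProbSeq M π' ∧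
        ∃ n ≤ (0 : ℤ), π n ≠ π' n :=
  nontrivial_tail_conditional_absolute_probabilities_general M hM1 P hMarkov hTail
end
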